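/- Fix the alphabet A = {0,1,2,3} and p = 21. For every square-free word v over A and every letter a ∈ A, Λ(va) = Λ(Λ(v)a), where Λ(w) is the longest suffix of w whose normalization belongs to Λ. -/

import Mathlib

open scoped Classical

/-- A square is a word of the form `u ++ u` with `u` nonempty. -/
def IsSquareWord {α : Type*} (w : List α) : Prop :=
  ∃ u : List α, u ≠ [] ∧ w = u ++ u

/-- A word is square-free if no factor of it is a square. -/
def SquareFree {α : Type*} (w : List α) : Prop :=
  ∀ t : List α, t <:+: w → ¬ IsSquareWord t

/-- `w` contains a square of period at most `p`. -/
def ContainsSquarePeriodLe {α : Type*} (p : ℕ) (w : List α) : Prop :=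
  ∃ u : List α, u ≠ [] ∧ u.length ≤ p ∧ (u ++ u) <:+: w

/-- A square is minimal if no proper factor of it is a square. -/
def MinimalSquare {α : Type*} (s : List α) : Prop :=
  IsSquareWord s ∧ ∀ t : List α, t <:+: s → t.length < s.length → ¬ IsSquareWord t

/-- The normalization of a word over `{0,1,2,3}`: the lexicographically smallest
word among all its images under permutations of the alphabet. -/
noncomputable def norm4 (u : List (Fin 4)) : List (Fin 4) :=
  (Finset.image (fun π : Equiv.Perm (Fin 4) => u.map π) Finset.univ).min'
    ⟨u, Finset.mem_image.mpr ⟨Equiv.refl _, Finset.mem_univ _, by simp⟩⟩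

/-- `Λ`: the set of normalized square-free prefixes of minimal squares of period
at most `21`. -/
def Lambda : Set (List (Fin 4)) :=
  {w | norm4 w = w ∧ SquareFree w ∧
    ∃ u : List (Fin 4), u ≠ [] ∧ u.length ≤ 21 ∧ MinimalSquare (u ++ u) ∧ w <+: u ++ u}

/-- `Λ(w)`: the longest suffix of `w` whose normalization belongs to `Λ`. -/
noncomputable def lambdaOf (w : List (Fin 4)) : List (Fin 4) :=
  (w.tails.find? fun s => decide (norm4 s ∈ Lambda)).getD []

/-! Membership of `norm4 w` in `Λ` is invariant under renaming the letters of `w`, so it just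
says that `w` is square-free and a prefix of a minimal square of period at most `21`; in
particular it is closed under taking prefixes. For any prefix-closed property `P` with `P []`,
the longest `P`-suffix of `va` is empty or of the form `da` with `d` a `P`-suffix of `v`, hence
with `d` a suffix of the longest `P`-suffix of `v`; conversely the longest `P`-suffix of `Λ(v)a`
is a `P`-suffix of `va`. -/

section LongestSuffix

variable {α : Type*} (P : List α → Prop) [DecidablePred P]

def longestSuffix (w : List α) : List α :=
  (w.tails.find? fun s => decide (P s)).getD []

@[simp]
lemma longestSuffix_nil : longestSuffix P [] = [] := by
  by_cases h : P [] <;> simp [longestSuffix, h]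

lemma longestSuffix_cons (b : α) (w : List α) :
    longestSuffix P (b :: w) = if P (b :: w) then b :: w else longestSuffix P w := by
  by_cases h : P (b :: w) <;> simp [longestSuffix, h]

variable {P}

lemma longestSuffix_suffix (w : List α) : longestSuffix P w <:+ w := by
  induction w with
  | nil => simp
  | cons b w ih =>
    rw [longestSuffix_cons]
    split
    · exact List.suffix_refl _
    · exact ih.trans (List.suffix_cons b w)

lemma longestSuffix_spec (hP : P []) (w : List α) : P (longestSuffix P w) := by
  induction w with
  | nil => simpa using hP
  | cons b w ih =>
    rw [longestSuffix_cons]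
    split <;> assumption

lemma List.IsSuffix.suffix_longestSuffix {s w : List α} (hs : s <:+ w) (hPs : P s) :
    s <:+ longestSuffix P w := by
  induction w with
  | nil =>
    rw [List.suffix_nil.1 hs]
    exact List.nil_suffix
  | cons b w ih =>
    rw [longestSuffix_cons]
    rcases List.suffix_cons_iff.1 hs with rfl | hs
    · simp [hPs]
    · split
      · exact hs.trans (List.suffix_cons b w)
      · exact ih hs

theorem longestSuffix_append_singleton (hP : P []) (hclosed : ∀ x a, P (x ++ [a]) → P x)
    (v : List α) (a : α) :
    longestSuffix P (v ++ [a]) = longestSuffix P (longestSuffix P v ++ [a]) := by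
  have hLv : longestSuffix P v ++ [a] <:+ v ++ [a] :=
    List.suffix_append_self_iff.2 (longestSuffix_suffix v)
  have hle : longestSuffix P (v ++ [a]) <:+ longestSuffix P v ++ [a] := by
    rcases List.suffix_concat_iff.1 (longestSuffix_suffix (P := P) (v ++ [a]))
      with h | ⟨d, hd, hdv⟩
    · rw [h]
      exact List.nil_suffix
    · have hPd : P d := hclosed d a (hd ▸ longestSuffix_spec hP _)
      rw [hd]
      exact List.suffix_append_self_iff.2 (hdv.suffix_longestSuffix hPd)
  have hge : longestSuffix P (longestSuffix P v ++ [a]) <:+ longestSuffix P (v ++ [a]) :=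
    ((longestSuffix_suffix _).trans hLv).suffix_longestSuffix (longestSuffix_spec hP _)
  exact List.Sublist.antisymm (hle.suffix_longestSuffix (longestSuffix_spec hP _)).sublist
    hge.sublist

end LongestSuffix

section Words

variable {α β : Type*}

lemma IsSquareWord.map (f : α → β) {w : List α} (h : IsSquareWord w) : IsSquareWord (w.map f) := by
  obtain ⟨u, hu, rfl⟩ := h
  exact ⟨u.map f, by simpa using hu, List.map_append⟩

lemma SquareFree.of_map (f : α → β) {w : List α} (h : SquareFree (w.map f)) : SquareFree w :=
  fun t ht hsq => h (t.map f) (ht.map f) (hsq.map f)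

lemma SquareFree.map_equiv (e : α ≃ β) {w : List α} (h : SquareFree w) : SquareFree (w.map e) :=
  SquareFree.of_map e.symm (by simpa [List.map_map] using h)

lemma SquareFree.infix {t w : List α} (h : SquareFree w) (ht : t <:+: w) : SquareFree t :=
  fun s hs => h s (hs.trans ht)

lemma MinimalSquare.map_equiv (e : α ≃ β) {s : List α} (h : MinimalSquare s) :
    MinimalSquare (s.map e) := by
  refine ⟨h.1.map e, fun t ht hlen hsq => h.2 (t.map e.symm) ?_ (by simpa using hlen) (hsq.map _)⟩
  simpa [List.map_map] using ht.map e.symm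

def IsMinimalSquarePrefix (p : ℕ) (w : List α) : Prop :=
  ∃ u : List α, u ≠ [] ∧ u.length ≤ p ∧ MinimalSquare (u ++ u) ∧ w <+: u ++ u

lemma IsMinimalSquarePrefix.map_equiv {p : ℕ} (e : α ≃ β) {w : List α}
    (h : IsMinimalSquarePrefix p w) : IsMinimalSquarePrefix p (w.map e) := by
  obtain ⟨u, hu, hlen, hmin, hw⟩ := h
  refine ⟨u.map e, by simpa using hu, by simpa using hlen, ?_, ?_⟩
  · simpa using hmin.map_equiv e
  · simpa using hw.map e

lemma IsMinimalSquarePrefix.of_prefix {p : ℕ} {x w : List α} (h : IsMinimalSquarePrefix p w)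
    (hx : x <+: w) : IsMinimalSquarePrefix p x := by
  obtain ⟨u, hu, hlen, hmin, hw⟩ := h
  exact ⟨u, hu, hlen, hmin, hx.trans hw⟩

lemma isMinimalSquarePrefix_nil {p : ℕ} (hp : 0 < p) [Inhabited α] :
    IsMinimalSquarePrefix p ([] : List α) := by
  refine ⟨[default], by simp, hp, ⟨⟨[default], by simp, rfl⟩, ?_⟩, List.nil_prefix⟩
  rintro t - hlen ⟨u, hu, rfl⟩
  have := List.length_pos_iff.2 hu
  simp only [List.length_append, List.length_cons, List.length_nil] at hlen
  omega

lemma squareFree_nil : SquareFree ([] : List α) := by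
  rintro t ht ⟨u, hu, rfl⟩
  simp_all

end Words

lemma exists_perm_norm4_eq_map (u : List (Fin 4)) : ∃ π : Equiv.Perm (Fin 4), norm4 u = u.map π := by
  obtain ⟨π, -, hπ⟩ := Finset.mem_image.1 (Finset.min'_mem _ _ : norm4 u ∈ _)
  exact ⟨π, hπ.symm⟩

lemma norm4_map (u : List (Fin 4)) (π : Equiv.Perm (Fin 4)) : norm4 (u.map π) = norm4 u := by
  have : Finset.univ.image (fun σ : Equiv.Perm (Fin 4) => (u.map π).map σ) =
      Finset.univ.image (fun σ : Equiv.Perm (Fin 4) => u.map σ) :=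
    calc Finset.univ.image (fun σ : Equiv.Perm (Fin 4) => (u.map π).map σ)
        _ = (Finset.univ.image (· * π)).image (fun σ : Equiv.Perm (Fin 4) => u.map σ) := by
          simp only [Finset.image_image, Function.comp_def, List.map_map, Equiv.Perm.coe_mul]
        _ = _ := by rw [Finset.image_univ_of_surjective (mul_right_surjective π)]
  simp only [norm4, this]

lemma norm4_norm4 (u : List (Fin 4)) : norm4 (norm4 u) = norm4 u := by
  obtain ⟨π, hπ⟩ := exists_perm_norm4_eq_map u
  rw [hπ, norm4_map, hπ]

lemma norm4_mem_Lambda_iff (w : List (Fin 4)) :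
    norm4 w ∈ Lambda ↔ SquareFree w ∧ IsMinimalSquarePrefix 21 w := by
  obtain ⟨π, hπ⟩ := exists_perm_norm4_eq_map w
  have hback : (w.map π).map π.symm = w := by simp [List.map_map]
  show norm4 (norm4 w) = norm4 w ∧ SquareFree (norm4 w) ∧ IsMinimalSquarePrefix 21 (norm4 w) ↔ _
  rw [norm4_norm4, hπ]
  refine ⟨fun ⟨_, hsf, hmin⟩ => ?_, fun ⟨hsf, hmin⟩ => ⟨rfl, hsf.map_equiv π, hmin.map_equiv π⟩⟩
  rw [← hback]
  exact ⟨hsf.map_equiv π.symm, hmin.map_equiv π.symm⟩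

lemma lambdaOf_eq_longestSuffix (w : List (Fin 4)) :
    lambdaOf w = longestSuffix (fun s : List (Fin 4) => norm4 s ∈ Lambda) w := rfl

lemma norm4_mem_Lambda_of_prefix {x w : List (Fin 4)} (hx : x <+: w) (hw : norm4 w ∈ Lambda) :
    norm4 x ∈ Lambda := by
  obtain ⟨hsf, hmin⟩ := (norm4_mem_Lambda_iff w).1 hw
  exact (norm4_mem_Lambda_iff x).2 ⟨hsf.infix hx.isInfix, hmin.of_prefix hx⟩

theorem stmt11_general (v : List (Fin 4)) (a : Fin 4) :
    lambdaOf (v ++ [a]) = lambdaOf (lambdaOf v ++ [a]) := by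
  have hnil : norm4 [] ∈ Lambda :=
    (norm4_mem_Lambda_iff []).2 ⟨squareFree_nil, isMinimalSquarePrefix_nil (by norm_num)⟩
  simp only [lambdaOf_eq_longestSuffix]
  exact longestSuffix_append_singleton (P := fun s => norm4 s ∈ Lambda) hnil
    (fun x a hx => norm4_mem_Lambda_of_prefix (List.prefix_append x [a]) hx) v a

/-- For every square-free word `v` over `{0,1,2,3}` and every letter `a`,
`Λ(va) = Λ(Λ(v)a)`. -/
theorem stmt11 (v : List (Fin 4)) (hv : SquareFree v) (a : Fin 4) :
    lambdaOf (v ++ [a]) = lambdaOf (lambdaOf v ++ [a]) :=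
  stmt11_general v a
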